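/- If no node feature equals the zero vector and w(l) > 0 for all l, then TD_w(T_a, T_b) = 0 implies T_a = T_b (the two rooted trees are isomorphic as labelled rooted trees), for trees of equal finite depth. -/

import Mathlib

/-! Induction on the recursion depth. A vanishing distance forces equal root features and a
zero-cost optimal matching of the padded children. The matching cannot pair a child with a
blank, since a tree with nonzero root feature lies at positive distance from the blank tree;
so no padding occurs and the matching pairs the children bijectively at distance zero, to
which the induction hypothesis applies. -/

open scoped BigOperators


noncomputable section

/-- Unnormalized optimal transport between equal-cardinality multisets (represented
as lists): the minimum over bijective matchings of the summed ground costs. -/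
noncomputable def listOT {α : Type*} (d : α → α → ℝ) (X Y : List α) : ℝ :=
  sInf {c : ℝ | ∃ Y' : List α, Y.Perm Y' ∧ c = (List.zipWith d X Y').sum}

/-- Blank augmentation `ρ`: pad the smaller multiset with copies of the blank
element `b` so that both multisets have equal cardinality. -/
def pad {α : Type*} (b : α) (X Y : List α) : List α × List α :=
  (X ++ List.replicate (Y.length - X.length) b,
   Y ++ List.replicate (X.length - Y.length) b)

/-- Blank-augmented unnormalized optimal transport `OT_d(ρ(X, Y))`. -/
noncomputable def otPad {α : Type*} (d : α → α → ℝ) (b : α) (X Y : List α) : ℝ :=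
  listOT d (pad b X Y).1 (pad b X Y).2

/-- Rooted trees with node features in `ℝ^p`; children are recorded as a list
(representing the multiset of child subtrees). -/
inductive RTree (p : ℕ) : Type
  | node : EuclideanSpace ℝ (Fin p) → List (RTree p) → RTree p

namespace RTree

variable {p : ℕ}

/-- The blank tree: a single node with zero feature vector and no children. -/
def blank : RTree p := node 0 []

mutual
  /-- Depth of a rooted tree (a single node has depth 1). -/
  def depth : RTree p → ℕ
    | node _ cs => 1 + depthList cs
  /-- Maximal depth of a list of trees. -/
  def depthList : List (RTree p) → ℕ
    | [] => 0
    | t :: ts => max (depth t) (depthList ts)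
end

/-- Tree distance with recursion fuel: `tdAux w n` computes the hierarchical-OT
tree distance `TD_w` correctly whenever `n` is at least the maximal depth. -/
noncomputable def tdAux (w : ℕ → ℝ) : ℕ → RTree p → RTree p → ℝ
  | 0, _, _ => 0
  | n + 1, node x cs, node y ds =>
      ‖x - y‖ +
        (if 1 < max (node x cs).depth (node y ds).depth then
          w (max (node x cs).depth (node y ds).depth) * otPad (tdAux w n) blank cs ds
        else 0)

/-- The tree distance `TD_w`: distance of root features, plus `w(L)` times the
blank-augmented unnormalized OT between the multisets of child subtrees (with
`TD_w` as the recursive ground cost), `L` being the maximum depth. -/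
noncomputable def TD (w : ℕ → ℝ) (Ta Tb : RTree p) : ℝ :=
  tdAux w (max Ta.depth Tb.depth) Ta Tb

/-- Number of nodes at a level of the tree (level `0` is the root, so
`Width_l(T) = widthAt T (l-1)` in 1-indexed level notation). -/
def widthAt : RTree p → ℕ → ℕ
  | _, 0 => 1
  | node _ cs, l + 1 => (cs.map (fun c => widthAt c l)).sum
termination_by t l => l

/-- Every node feature in the tree is nonzero. -/
inductive NoZero : RTree p → Prop
  | node {x : EuclideanSpace ℝ (Fin p)} {cs : List (RTree p)} :
      x ≠ 0 → (∀ t ∈ cs, NoZero t) → NoZero (RTree.node x cs)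

/-- Equivalence of rooted labelled trees up to reordering of children (fuel
version). -/
def equivAux : ℕ → RTree p → RTree p → Prop
  | 0, _, _ => True
  | n + 1, node x cs, node y ds =>
      x = y ∧ ∃ ds' : List (RTree p), ds.Perm ds' ∧ List.Forall₂ (equivAux n) cs ds'

/-- Two rooted labelled trees are isomorphic: equal roots and children match up
to a bijection level by level. -/
def Equiv' (Ta Tb : RTree p) : Prop := equivAux (max Ta.depth Tb.depth) Ta Tb

end RTree

/-- Depth-`(k+1)` computation tree of node `v`: `compTree G x 0 v` is the single
node `v` with its feature, and the level-`(k+1)` tree attaches the depth-`k`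
computation trees of the neighbors of `v`. -/
noncomputable def compTree {V : Type*} [Fintype V] {p : ℕ} (G : SimpleGraph V)
    [DecidableRel G.Adj] (x : V → EuclideanSpace ℝ (Fin p)) : ℕ → V → RTree p
  | 0, v => RTree.node (x v) []
  | k + 1, v => RTree.node (x v) (((G.neighborFinset v).val.toList).map (compTree G x k))

/-- Tree Mover's Distance `TMD_w^L`: blank-augmented unnormalized OT between the
multisets of depth-`L` computation trees of the two attributed graphs, with the
hierarchical tree distance `TD_w` as ground cost. -/
noncomputable def TMD {Va Vb : Type*} [Fintype Va] [Fintype Vb] {p : ℕ}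
    (w : ℕ → ℝ) (L : ℕ)
    (Ga : SimpleGraph Va) [DecidableRel Ga.Adj] (xa : Va → EuclideanSpace ℝ (Fin p))
    (Gb : SimpleGraph Vb) [DecidableRel Gb.Adj] (xb : Vb → EuclideanSpace ℝ (Fin p)) : ℝ :=
  otPad (RTree.TD w) RTree.blank
    ((Finset.univ.val.toList).map (compTree Ga xa (L - 1)))
    ((Finset.univ.val.toList).map (compTree Gb xb (L - 1)))


namespace List

variable {α β : Type*}

theorem Forall₂.exists_mem_right {R : α → β → Prop} {X : List α} {Y : List β}
    (h : Forall₂ R X Y) {a : α} (ha : a ∈ X) : ∃ b ∈ Y, R a b := by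
  obtain ⟨⟨i, hi⟩, rfl⟩ := mem_iff_get.1 ha
  exact ⟨_, get_mem Y ⟨i, h.length_eq ▸ hi⟩, h.get hi _⟩

theorem Forall₂.exists_mem_left {R : α → β → Prop} {X : List α} {Y : List β}
    (h : Forall₂ R X Y) {b : β} (hb : b ∈ Y) : ∃ a ∈ X, R a b := by
  obtain ⟨⟨i, hi⟩, rfl⟩ := mem_iff_get.1 hb
  exact ⟨_, get_mem X ⟨i, h.length_eq ▸ hi⟩, h.get _ hi⟩

theorem Forall₂.imp_of_mem {R S : α → β → Prop} {X : List α} {Y : List β}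
    (H : ∀ a ∈ X, ∀ b ∈ Y, R a b → S a b) (h : Forall₂ R X Y) : Forall₂ S X Y :=
  forall₂_iff_zip.2 ⟨h.length_eq, fun hab =>
    H _ (of_mem_zip hab).1 _ (of_mem_zip hab).2 (forall₂_zip h hab)⟩

theorem forall_mem_map_uncurry_nonneg {d : α → β → ℝ} (hd : ∀ a b, 0 ≤ d a b)
    (Z : List (α × β)) : ∀ c ∈ Z.map (Function.uncurry d), 0 ≤ c := by
  intro c hc
  obtain ⟨⟨a, b⟩, -, rfl⟩ := mem_map.1 hc
  exact hd a b

theorem sum_zipWith_nonneg {d : α → β → ℝ} (hd : ∀ a b, 0 ≤ d a b) (X : List α) (Y : List β) :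
    0 ≤ (zipWith d X Y).sum := by
  rw [← map_uncurry_zip_eq_zipWith]
  exact sum_nonneg (forall_mem_map_uncurry_nonneg hd _)

theorem forall₂_of_sum_zipWith_eq_zero {d : α → β → ℝ} (hd : ∀ a b, 0 ≤ d a b)
    {X : List α} {Y : List β} (hlen : X.length = Y.length) (h : (zipWith d X Y).sum = 0) :
    Forall₂ (fun a b => d a b = 0) X Y := by
  rw [← map_uncurry_zip_eq_zipWith] at h
  exact forall₂_iff_zip.2 ⟨hlen, fun hab => all_zero_of_le_zero_le_of_sum_eq_zero
    (forall_mem_map_uncurry_nonneg hd _) h (mem_map_of_mem hab)⟩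

end List

section OptimalTransport

open List

variable {α : Type*} {d : α → α → ℝ}

theorem listOT_nonneg (hd : ∀ a b, 0 ≤ d a b) (X Y : List α) : 0 ≤ listOT d X Y :=
  Real.sInf_nonneg (by rintro c ⟨Y', -, rfl⟩; exact sum_zipWith_nonneg hd X Y')

theorem otPad_nonneg (hd : ∀ a b, 0 ≤ d a b) (b : α) (X Y : List α) : 0 ≤ otPad d b X Y :=
  listOT_nonneg hd _ _

theorem exists_perm_listOT_eq (d : α → α → ℝ) (X Y : List α) :
    ∃ Y', Y.Perm Y' ∧ (zipWith d X Y').sum = listOT d X Y := by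
  have hfin : {c : ℝ | ∃ Y', Y.Perm Y' ∧ c = (zipWith d X Y').sum}.Finite := by
    refine ((finite_toSet Y.permutations).image fun Y' => (zipWith d X Y').sum).subset ?_
    rintro c ⟨Y', hY', rfl⟩
    exact ⟨Y', mem_permutations.2 hY'.symm, rfl⟩
  obtain ⟨Y', hY', hc⟩ : listOT d X Y ∈ {c : ℝ | ∃ Y', Y.Perm Y' ∧ c = (zipWith d X Y').sum} :=
    Set.Nonempty.csInf_mem ⟨_, Y, Perm.refl Y, rfl⟩ hfin
  exact ⟨Y', hY', hc.symm⟩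

theorem exists_perm_forall₂_of_listOT_eq_zero (hd : ∀ a b, 0 ≤ d a b) {X Y : List α}
    (hlen : X.length = Y.length) (h : listOT d X Y = 0) :
    ∃ Y', Y.Perm Y' ∧ Forall₂ (fun a b => d a b = 0) X Y' := by
  obtain ⟨Y', hY', hsum⟩ := exists_perm_listOT_eq d X Y
  exact ⟨Y', hY', forall₂_of_sum_zipWith_eq_zero hd (hlen.trans hY'.length_eq) (hsum.trans h)⟩

theorem pad_of_length_le {b : α} {X Y : List α} (h : X.length ≤ Y.length) :
    pad b X Y = (X ++ replicate (Y.length - X.length) b, Y) := by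
  simp [pad, Nat.sub_eq_zero_of_le h]

theorem pad_of_length_ge {b : α} {X Y : List α} (h : Y.length ≤ X.length) :
    pad b X Y = (X, Y ++ replicate (X.length - Y.length) b) := by
  simp [pad, Nat.sub_eq_zero_of_le h]

theorem exists_perm_forall₂_of_otPad_eq_zero (hd : ∀ a b, 0 ≤ d a b) {b : α} {X Y : List α}
    (hX : ∀ x ∈ X, d x b ≠ 0) (hY : ∀ y ∈ Y, d b y ≠ 0) (h : otPad d b X Y = 0) :
    ∃ Y', Y.Perm Y' ∧ Forall₂ (fun x y => d x y = 0) X Y' := by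
  have hpad : (pad b X Y).1.length = (pad b X Y).2.length := by simp [pad]; omega
  obtain ⟨Y', hY', hf⟩ := exists_perm_forall₂_of_listOT_eq_zero hd hpad h
  rcases lt_trichotomy X.length Y.length with hlt | heq | hgt
  · rw [pad_of_length_le hlt.le] at hY' hf
    obtain ⟨y, hy, hby⟩ := hf.exists_mem_right
      (mem_append_right X (mem_replicate.2 ⟨by omega, rfl⟩))
    exact absurd hby (hY y (hY'.mem_iff.2 hy))
  · rw [pad_of_length_le heq.le, heq, Nat.sub_self, replicate_zero, append_nil] at hf hY'
    exact ⟨Y', hY', hf⟩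
  · rw [pad_of_length_ge hgt.le] at hY' hf
    obtain ⟨x, hx, hxb⟩ := hf.exists_mem_left
      (hY'.mem_iff.1 (mem_append_right Y (mem_replicate.2 ⟨by omega, rfl⟩)))
    exact absurd hxb (hX x hx)

end OptimalTransport

namespace RTree

variable {p : ℕ}

theorem depth_node (x : EuclideanSpace ℝ (Fin p)) (cs : List (RTree p)) :
    (node x cs).depth = 1 + depthList cs := rfl

theorem one_le_depth : ∀ T : RTree p, 1 ≤ T.depth
  | node _ _ => by rw [depth_node]; omega

theorem depthList_eq_zero_iff {cs : List (RTree p)} : depthList cs = 0 ↔ cs = [] := by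
  cases cs with
  | nil => simp [depthList]
  | cons t ts => simp [depthList, Nat.one_le_iff_ne_zero.1 (one_le_depth t)]

theorem depth_le_depthList_of_mem {t : RTree p} : ∀ {cs : List (RTree p)}, t ∈ cs →
    t.depth ≤ depthList cs
  | _ :: _, .head _ => le_max_left _ _
  | _ :: _, .tail _ h => (depth_le_depthList_of_mem h).trans (le_max_right _ _)

theorem NoZero.ne_zero {x : EuclideanSpace ℝ (Fin p)} {cs : List (RTree p)}
    (h : NoZero (RTree.node x cs)) : x ≠ 0 := by
  cases h with
  | node hx _ => exact hx

theorem NoZero.of_mem {x : EuclideanSpace ℝ (Fin p)} {cs : List (RTree p)}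
    (h : NoZero (RTree.node x cs)) {t : RTree p} (ht : t ∈ cs) : NoZero t := by
  cases h with
  | node _ hcs => exact hcs t ht

variable {w : ℕ → ℝ}

theorem tdAux_nonneg (hw : ∀ l, 0 ≤ w l) : ∀ (n : ℕ) (T₁ T₂ : RTree p), 0 ≤ tdAux w n T₁ T₂
  | 0, _, _ => le_rfl
  | n + 1, node x cs, node y ds => by
    rw [tdAux]
    refine add_nonneg (norm_nonneg _) ?_
    split_ifs
    · exact mul_nonneg (hw _) (otPad_nonneg (tdAux_nonneg hw n) _ _ _)
    · exact le_rfl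

theorem tdAux_succ_eq_zero_iff (hw : ∀ l, 0 < w l) {n : ℕ} {x y : EuclideanSpace ℝ (Fin p)}
    {cs ds : List (RTree p)} :
    tdAux w (n + 1) (node x cs) (node y ds) = 0 ↔
      x = y ∧ (1 < max (node x cs).depth (node y ds).depth →
        otPad (tdAux w n) blank cs ds = 0) := by
  have hot := otPad_nonneg (tdAux_nonneg (fun l => (hw l).le) n) blank cs ds
  rw [tdAux, add_eq_zero_iff_of_nonneg (norm_nonneg _), norm_eq_zero, sub_eq_zero]
  · split_ifs with hdeep
    · simp [hdeep, (hw _).ne']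
    · simp [hdeep]
  · split_ifs
    · exact mul_nonneg (hw _).le hot
    · exact le_rfl

theorem tdAux_blank_left_ne_zero (hw : ∀ l, 0 < w l) {n : ℕ} (hn : 1 ≤ n) {T : RTree p}
    (hT : NoZero T) : tdAux w n blank T ≠ 0 := by
  obtain ⟨m, rfl⟩ := Nat.exists_eq_add_of_le' hn
  obtain ⟨z, es⟩ := T
  exact fun h => hT.ne_zero ((tdAux_succ_eq_zero_iff hw).1 h).1.symm

theorem tdAux_blank_right_ne_zero (hw : ∀ l, 0 < w l) {n : ℕ} (hn : 1 ≤ n) {T : RTree p}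
    (hT : NoZero T) : tdAux w n T blank ≠ 0 := by
  obtain ⟨m, rfl⟩ := Nat.exists_eq_add_of_le' hn
  obtain ⟨z, es⟩ := T
  exact fun h => hT.ne_zero ((tdAux_succ_eq_zero_iff hw).1 h).1

theorem equivAux_of_tdAux_eq_zero (hw : ∀ l, 0 < w l) :
    ∀ (n : ℕ) (Ta Tb : RTree p), NoZero Ta → NoZero Tb → max Ta.depth Tb.depth ≤ n →
      tdAux w n Ta Tb = 0 → equivAux n Ta Tb
  | 0, _, _, _, _, _, _ => trivial
  | n + 1, node x cs, node y ds, ha, hb, hdepth, h0 => by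
    obtain ⟨rfl, hchildren⟩ := (tdAux_succ_eq_zero_iff hw).1 h0
    refine ⟨rfl, ?_⟩
    rw [depth_node, depth_node] at hdepth hchildren
    by_cases hdeep : 1 < max (1 + depthList cs) (1 + depthList ds)
    · have hn : 1 ≤ n := by omega
      obtain ⟨ds', hperm, hzero⟩ := exists_perm_forall₂_of_otPad_eq_zero
        (tdAux_nonneg (fun l => (hw l).le) n)
        (fun c hc => tdAux_blank_right_ne_zero hw hn (ha.of_mem hc))
        (fun c hc => tdAux_blank_left_ne_zero hw hn (hb.of_mem hc)) (hchildren hdeep)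
      refine ⟨ds', hperm, hzero.imp_of_mem fun c hc d hd hcd => ?_⟩
      have hd' : d ∈ ds := hperm.mem_iff.2 hd
      refine equivAux_of_tdAux_eq_zero hw n c d (ha.of_mem hc) (hb.of_mem hd') ?_ hcd
      have := depth_le_depthList_of_mem hc
      have := depth_le_depthList_of_mem hd'
      omega
    · obtain ⟨rfl, rfl⟩ : cs = [] ∧ ds = [] :=
        ⟨depthList_eq_zero_iff.1 (by omega), depthList_eq_zero_iff.1 (by omega)⟩
      exact ⟨[], List.Perm.refl _, List.Forall₂.nil⟩

end RTree

/-- If no node feature is the zero vector and all weights are positive, then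
vanishing tree distance implies the rooted labelled trees are isomorphic
(equal up to reordering of children), for trees of equal depth. -/
theorem TD_eq_zero_imp_equiv {p : ℕ} (w : ℕ → ℝ) (hw : ∀ l, 0 < w l)
    (Ta Tb : RTree p) (ha : RTree.NoZero Ta) (hb : RTree.NoZero Tb)
    (hd : Ta.depth = Tb.depth) (h0 : RTree.TD w Ta Tb = 0) :
    RTree.Equiv' Ta Tb :=
  RTree.equivAux_of_tdAux_eq_zero hw _ Ta Tb ha hb le_rfl h0

end
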